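/- arXiv:1004.3552 — 3 statements merged into one kernel-verified Lean document; each statement's English description precedes it below -/
import Mathlib

section
/- Let 𝒰 be a group of unitary operators on a complex Hilbert space H, let f ∈ H be a frame vector for 𝒰 with frame operator S, set p_U = S^{-1/2}Uf for U ∈ 𝒰, and let Φ : H → ℓ²(𝒰) be the analysis operator Φg = ∑_{U∈𝒰} ⟨g, p_U⟩ e_U of the Parseval frame {p_U}_{U∈𝒰}. Then Φ is a linear isometry, and Φ intertwines 𝒰 with the left-regular representation: λ_U Φ = Φ U for all U ∈ 𝒰, where λ_U is the unitary on ℓ²(𝒰) determined by λ_U e_V = e_{UV}. In particular Φ* λ_U Φ = U for all U ∈ 𝒰. -/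
local notation "⟪" x ", " y "⟫" => @inner ℂ _ _ x y

open ContinuousLinearMap
open scoped InnerProductSpace

/-! Reindexing the frame sum by `V ↦ UV` shows that the frame operator `S` of the orbit `{Uf}`
commutes with every `U ∈ 𝒰`; hence so do `S⁻¹ = R²` and its positive square root `R`, which
makes the canonical Parseval frame covariant: `p_{UV} = U p_V`. Covariance turns the coordinate
shift `λ_U` into `Φ U`, and Parseval's identity `∑ ⟨x, p_U⟩⟨p_U, y⟩ = ⟨x, y⟩`, which follows
from `R S R = 1`, gives `Φ* Φ = 1`. -/

theorem CFC.commute_of_commute_mul_self {A : Type*} [NonUnitalCStarAlgebra A] [PartialOrder A]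
    [StarOrderedRing A] {a b : A} (ha : 0 ≤ a) (h : Commute (a * a) b) : Commute a b :=
  CFC.sqrt_mul_self a ha ▸ (h.cfcₙ_nnreal NNReal.sqrt : Commute (CFC.sqrt (a * a)) b)

theorem lp.apply_eq_of_map_single {𝕜 ι : Type*} [RCLike 𝕜] [DecidableEq ι] {p : ENNReal}
    [Fact (1 ≤ p)] (hp : p ≠ ⊤) (σ : ι ≃ ι) (L : lp (fun _ : ι => 𝕜) p →L[𝕜] lp (fun _ : ι => 𝕜) p)
    (hL : ∀ i, L (lp.single p i 1) = lp.single p (σ i) 1) (x : lp (fun _ : ι => 𝕜) p) (j : ι) :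
    L x j = x (σ.symm j) := by
  set ev := lp.evalCLM 𝕜 (fun _ : ι => 𝕜) p j
  have hsum := ((lp.hasSum_single hp x).map L L.continuous).map ev ev.continuous
  have hterm (i : ι) : ev (L (lp.single p i (x i))) = if i = σ.symm j then x (σ.symm j) else 0 := by
    rw [← mul_one (x i), ← smul_eq_mul, lp.single_smul, map_smul, hL]
    split_ifs with hi <;> simp [ev, lp.evalCLM, hi, ← σ.eq_symm_apply]
  simp only [Function.comp_def, hterm] at hsum
  exact hsum.unique (hasSum_ite_eq (σ.symm j) (x (σ.symm j)))

section

variable {𝕜 H ι : Type*} [RCLike 𝕜] [NormedAddCommGroup H] [InnerProductSpace 𝕜 H]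

theorem commute_frameOperator_of_orbit (𝒰 : Subgroup (H ≃ₗᵢ[𝕜] H)) (f : H) {S : H →L[𝕜] H}
    (hS : ∀ x, HasSum (fun U : 𝒰 => ⟪(U : H ≃ₗᵢ[𝕜] H) f, x⟫_𝕜 • (U : H ≃ₗᵢ[𝕜] H) f) (S x))
    (U : 𝒰) : Commute S ((U : H ≃ₗᵢ[𝕜] H) : H →L[𝕜] H) := by
  set u := (U : H ≃ₗᵢ[𝕜] H)
  ext x
  have hshift := (Equiv.mulLeft U).hasSum_iff.mpr (hS (u x))
  refine hshift.unique ?_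
  convert (hS x).map (u : H →L[𝕜] H) u.continuous using 1
  · funext V
    simp [u, LinearIsometryEquiv.inner_map_map]
  · rfl

theorem hasSum_inner_mul_inner_of_frameOperator {v : ι → H} {S R : H →L[𝕜] H}
    (hS : ∀ x, HasSum (fun i => ⟪v i, x⟫_𝕜 • v i) (S x)) (hR : (R : H →ₗ[𝕜] H).IsSymmetric)
    (hRSR : R * S * R = 1) (x y : H) :
    HasSum (fun i => ⟪x, R (v i)⟫_𝕜 * ⟪R (v i), y⟫_𝕜) ⟪x, y⟫_𝕜 := by
  have hR' : ∀ a b, ⟪R a, b⟫_𝕜 = ⟪a, R b⟫_𝕜 := hR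
  have hRSRy : R (S (R y)) = y := by simpa using congr($hRSR y)
  have hmap := (hS (R y)).map (innerSL 𝕜 (R x)) (innerSL 𝕜 (R x)).continuous
  convert hmap using 1
  · funext i
    rw [Function.comp_apply, innerSL_apply_apply, inner_smul_right, hR', ← hR', mul_comm]
  · rw [innerSL_apply_apply, hR', hRSRy]

theorem lp.inner_eq_of_hasSum_inner_mul_inner {p : ι → H} {Φ : H → lp (fun _ : ι => 𝕜) 2}
    (hΦ : ∀ g i, Φ g i = ⟪p i, g⟫_𝕜)
    (hp : ∀ x y, HasSum (fun i => ⟪x, p i⟫_𝕜 * ⟪p i, y⟫_𝕜) ⟪x, y⟫_𝕜) (x y : H) :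
    ⟪Φ x, Φ y⟫_𝕜 = ⟪x, y⟫_𝕜 := by
  refine (lp.hasSum_inner (Φ x) (Φ y)).unique ?_
  convert hp x y using 2 with i
  rw [hΦ, hΦ, RCLike.inner_apply, inner_conj_symm, mul_comm]

theorem lp.map_analysis_of_covariant {G : Type*} [Group G] {q : ENNReal} {ρ : G → H ≃ₗᵢ[𝕜] H}
    {p : G → H} (hp : ∀ U V, p (U * V) = ρ U (p V)) {Φ : H → lp (fun _ : G => 𝕜) q}
    (hΦ : ∀ g V, Φ g V = ⟪p V, g⟫_𝕜) {U : G} {L : lp (fun _ : G => 𝕜) q → lp (fun _ : G => 𝕜) q}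
    (hL : ∀ x W, L x W = x (U⁻¹ * W)) (g : H) : L (Φ g) = Φ (ρ U g) := by
  ext W
  rw [hL, hΦ, hΦ, ← (ρ U).inner_map_map, ← hp, mul_inv_cancel_left]

end

theorem analysis_operator_intertwines_left_regular_general
    {H : Type} [NormedAddCommGroup H] [InnerProductSpace ℂ H] [CompleteSpace H]
    (𝒰 : Subgroup (H ≃ₗᵢ[ℂ] H)) [DecidableEq 𝒰] (f : H)
    -- `S` is the frame operator of `{Uf}_{U ∈ 𝒰}`
    (S : H →L[ℂ] H)
    (hS : ∀ x : H, HasSum (fun U : 𝒰 => ⟪(U : H ≃ₗᵢ[ℂ] H) f, x⟫ • (U : H ≃ₗᵢ[ℂ] H) f) (S x))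
    -- `R = S^{-1/2}`: the positive square root of the inverse of `S`
    (R : H →L[ℂ] H) (hRpos : R.IsPositive)
    (hRS : (R ∘L R) ∘L S = ContinuousLinearMap.id ℂ H)
    (hSR : S ∘L (R ∘L R) = ContinuousLinearMap.id ℂ H)
    -- `p_U = S^{-1/2} U f`
    (p : 𝒰 → H) (hp : ∀ U : 𝒰, p U = R ((U : H ≃ₗᵢ[ℂ] H) f))
    -- `Φ` is the analysis operator of `{p_U}` : `(Φ g)(U) = ⟨g, p_U⟩`
    (Φ : H →L[ℂ] lp (fun _ : 𝒰 => ℂ) 2)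
    (hΦ : ∀ (g : H) (U : 𝒰), Φ g U = ⟪p U, g⟫)
    -- `λ_U` is the unitary on `ℓ²(𝒰)` determined by `λ_U e_V = e_{UV}`
    (lam : 𝒰 → (lp (fun _ : 𝒰 => ℂ) 2 ≃ₗᵢ[ℂ] lp (fun _ : 𝒰 => ℂ) 2))
    (hlam : ∀ U V : 𝒰, lam U (lp.single 2 V (1 : ℂ)) = lp.single 2 (U * V) (1 : ℂ)) :
    -- `Φ` is an isometry
    Isometry Φ ∧
    -- `λ_U Φ = Φ U` for all `U ∈ 𝒰`
    (∀ (U : 𝒰) (g : H), lam U (Φ g) = Φ ((U : H ≃ₗᵢ[ℂ] H) g)) ∧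
    -- `Φ* λ_U Φ = U` for all `U ∈ 𝒰`
    (∀ (U : 𝒰) (g : H),
      ContinuousLinearMap.adjoint Φ (lam U (Φ g)) = (U : H ≃ₗᵢ[ℂ] H) g) := by
  let Sᵤ : (H →L[ℂ] H)ˣ := ⟨S, R * R, hSR, hRS⟩
  have hRU (U : 𝒰) : Commute R ((U : H ≃ₗᵢ[ℂ] H) : H →L[ℂ] H) :=
    CFC.commute_of_commute_mul_self ((nonneg_iff_isPositive R).mpr hRpos)
      (Commute.units_inv_left (u := Sᵤ) (commute_frameOperator_of_orbit 𝒰 f hS U))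
  have hcov (U V : 𝒰) : p (U * V) = (U : H ≃ₗᵢ[ℂ] H) (p V) := by
    rw [hp, hp]
    exact congr($((hRU U).eq) ((V : H ≃ₗᵢ[ℂ] H) f))
  have hRSR : R * S * R = 1 := by
    have hRS' : Commute R S :=
      Commute.units_inv_right_iff (u := Sᵤ) |>.mp ((Commute.refl R).mul_right (Commute.refl R))
    rw [hRS'.eq, mul_assoc]
    exact hSR
  have hΦΦ : adjoint Φ ∘L Φ = 1 := Φ.inner_map_map_iff_adjoint_comp_self.mp <|
    lp.inner_eq_of_hasSum_inner_mul_inner hΦ fun x y => by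
      simpa only [hp] using hasSum_inner_mul_inner_of_frameOperator hS
        hRpos.isSelfAdjoint.isSymmetric hRSR x y
  have hintertwine (U : 𝒰) (g : H) : lam U (Φ g) = Φ ((U : H ≃ₗᵢ[ℂ] H) g) :=
    lp.map_analysis_of_covariant hcov hΦ
      (lp.apply_eq_of_map_single (by norm_num) (Equiv.mulLeft U) (lam U : _ →L[ℂ] _) (hlam U)) g
  refine ⟨Φ.isometry_iff_adjoint_comp_self.mpr hΦΦ, hintertwine, fun U g => ?_⟩
  rw [hintertwine, ← comp_apply, hΦΦ, one_apply_eq_self]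

/-- Let `f` be a frame vector for a group `𝒰` of unitaries on `H` with frame operator `S`,
let `p_U = S^{-1/2}(Uf)` be the canonical Parseval frame, and let `Φ : H → ℓ²(𝒰)` be its
analysis operator. Then `Φ` is a linear isometry and intertwines `𝒰` with the left-regular
representation `λ` of `𝒰` on `ℓ²(𝒰)`: `λ_U Φ = Φ U`, hence `Φ* λ_U Φ = U`, for all `U ∈ 𝒰`. -/
theorem analysis_operator_intertwines_left_regular
    {H : Type} [NormedAddCommGroup H] [InnerProductSpace ℂ H] [CompleteSpace H]
    (𝒰 : Subgroup (H ≃ₗᵢ[ℂ] H)) [DecidableEq 𝒰] (f : H) (A B : ℝ) (hA : 0 < A) (hAB : A ≤ B)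
    -- `{Uf}_{U ∈ 𝒰}` is a frame for `H`
    (hframe : ∀ x : H,
      A * ‖x‖ ^ 2 ≤ ∑' U : 𝒰, ‖⟪(U : H ≃ₗᵢ[ℂ] H) f, x⟫‖ ^ 2 ∧
      ∑' U : 𝒰, ‖⟪(U : H ≃ₗᵢ[ℂ] H) f, x⟫‖ ^ 2 ≤ B * ‖x‖ ^ 2)
    -- `S` is the frame operator of `{Uf}_{U ∈ 𝒰}`
    (S : H →L[ℂ] H)
    (hS : ∀ x : H, HasSum (fun U : 𝒰 => ⟪(U : H ≃ₗᵢ[ℂ] H) f, x⟫ • (U : H ≃ₗᵢ[ℂ] H) f) (S x))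
    -- `R = S^{-1/2}`: the positive square root of the inverse of `S`
    (R : H →L[ℂ] H) (hRpos : R.IsPositive)
    (hRS : (R ∘L R) ∘L S = ContinuousLinearMap.id ℂ H)
    (hSR : S ∘L (R ∘L R) = ContinuousLinearMap.id ℂ H)
    -- `p_U = S^{-1/2} U f`
    (p : 𝒰 → H) (hp : ∀ U : 𝒰, p U = R ((U : H ≃ₗᵢ[ℂ] H) f))
    -- `Φ` is the analysis operator of `{p_U}` : `(Φ g)(U) = ⟨g, p_U⟩`
    (Φ : H →L[ℂ] lp (fun _ : 𝒰 => ℂ) 2)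
    (hΦ : ∀ (g : H) (U : 𝒰), Φ g U = ⟪p U, g⟫)
    -- `λ_U` is the unitary on `ℓ²(𝒰)` determined by `λ_U e_V = e_{UV}`
    (lam : 𝒰 → (lp (fun _ : 𝒰 => ℂ) 2 ≃ₗᵢ[ℂ] lp (fun _ : 𝒰 => ℂ) 2))
    (hlam : ∀ U V : 𝒰, lam U (lp.single 2 V (1 : ℂ)) = lp.single 2 (U * V) (1 : ℂ)) :
    -- `Φ` is an isometry
    Isometry Φ ∧
    -- `λ_U Φ = Φ U` for all `U ∈ 𝒰`
    (∀ (U : 𝒰) (g : H), lam U (Φ g) = Φ ((U : H ≃ₗᵢ[ℂ] H) g)) ∧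
    -- `Φ* λ_U Φ = U` for all `U ∈ 𝒰`
    (∀ (U : 𝒰) (g : H),
      ContinuousLinearMap.adjoint Φ (lam U (Φ g)) = (U : H ≃ₗᵢ[ℂ] H) g) :=
  analysis_operator_intertwines_left_regular_general 𝒰 f S hS R hRpos hRS hSR p hp Φ hΦ lam hlam
end

section
/- Let G be a countable group, μ a unimodular multiplier on G satisfying the cocycle identity and μ(g, e) = μ(e, g) = 1, let π be a μ-projective unitary representation of G on a complex Hilbert space H, and suppose {π(g)f}_{g∈G} is a frame for H with frame operator S. Set f₁ = S^{-1/2}f. Then there exist a complex Hilbert space K, a μ-projective unitary representation π' of G on K, and a vector f₂ ∈ K such that {π'(g)f₂}_{g∈G} is a Parseval frame for K and {π(g)f₁ ⊕ π'(g)f₂}_{g∈G} is an orthonormal basis for H ⊕ K. -/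
/-!
The frame operator `S` commutes with every `π g` (the orbit is permuted up to phases), hence so does
the positive square root `R` of `S⁻¹`, and the orbit of `f₁ = R f` is a Parseval frame. Its
analysis operator `θ x = (⟪π g f₁, x⟫)_g` is therefore an isometry `H → ℓ²(G)`, and it intertwines
`π` with the `μ`-twisted left regular representation `λ`, so `K = (range θ)ᗮ` is `λ`-invariant.
Take `π' = λ|_K` and `f₂ = δ₁ - θ f₁`, the projection of `δ₁` onto `K`; then
`π' g f₂ = δ_g - θ (π g f₁)`, and the unitary `H ⊕ K ≃ ℓ²(G)`, `(x, y) ↦ θ x + y`, sends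
`π g f₁ ⊕ π' g f₂` to the standard basis vector `δ_g`.
-/

local notation "⟪" x ", " y "⟫" => @inner ℂ _ _ x y

open scoped ComplexConjugate lp

noncomputable section

theorem conj_mul_of_norm_eq_one {z : ℂ} (hz : ‖z‖ = 1) : conj z * z = 1 := by
  simp [Complex.conj_mul', hz]

theorem mul_conj_of_norm_eq_one {z : ℂ} (hz : ‖z‖ = 1) : z * conj z = 1 := by
  simp [Complex.mul_conj', hz]

theorem Commute.of_nonneg_mul_self_eq_inv {A : Type*} [CStarAlgebra A] [PartialOrder A]
    [StarOrderedRing A] {r t : A} {u : Aˣ} (hr : 0 ≤ r) (hru : r * r = ↑u⁻¹)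
    (ht : Commute t u) : Commute t r := by
  rw [← CFC.sqrt_mul_self r hr, hru]
  exact ((Commute.units_inv_right ht).symm.cfcₙ_nnreal NNReal.sqrt).symm

variable {ι H : Type*} [NormedAddCommGroup H] [InnerProductSpace ℂ H]

theorem frameOp_comm_of_map_eq_smul {v : ι → H} {S : H →L[ℂ] H}
    (hS : ∀ x, HasSum (fun i => ⟪v i, x⟫ • v i) (S x)) (U : H ≃ₗᵢ[ℂ] H) (e : ι ≃ ι)
    {c : ι → ℂ} (hc : ∀ i, ‖c i‖ = 1) (hU : ∀ i, U (v i) = c i • v (e i)) (x : H) :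
    S (U x) = U (S x) := by
  have hv : ∀ i, v (e i) = conj (c i) • U (v i) := fun i => by
    rw [hU, smul_smul, conj_mul_of_norm_eq_one (hc i), one_smul]
  have hterm : ∀ i, ⟪v (e i), U x⟫ • v (e i) = U (⟪v i, x⟫ • v i) := fun i => by
    rw [hv, inner_smul_left, Complex.conj_conj, U.inner_map_map, smul_smul, map_smul,
      mul_right_comm, mul_conj_of_norm_eq_one (hc i), one_mul]
  have hUS : HasSum (fun i => U (⟪v i, x⟫ • v i)) (U (S x)) := by
    simpa using (hS x).mapL (U : H →L[ℂ] H)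
  refine HasSum.unique ?_ hUS
  simpa only [Function.comp_def, hterm] using e.hasSum_iff.mpr (hS (U x))

theorem hasSum_norm_inner_sq_of_frameOp {v : ι → H} {S R : H →L[ℂ] H}
    (hS : ∀ x, HasSum (fun i => ⟪v i, x⟫ • v i) (S x)) (hR : (R : H →ₗ[ℂ] H).IsSymmetric)
    (hRSR : R * S * R = 1) (x : H) : HasSum (fun i => ‖⟪R (v i), x⟫‖ ^ 2) (‖x‖ ^ 2) := by
  have hR' : ∀ a b, ⟪R a, b⟫ = ⟪a, R b⟫ := hR
  have hterm : ∀ i, ⟪R x, ⟪v i, R x⟫ • v i⟫ = ((‖⟪R (v i), x⟫‖ ^ 2 : ℝ) : ℂ) := fun i => by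
    rw [inner_smul_right, ← inner_conj_symm (R x), Complex.mul_conj', ← hR']
    norm_cast
  have hsum : ⟪R x, S (R x)⟫ = ((‖x‖ ^ 2 : ℝ) : ℂ) := by
    rw [hR', ← mul_apply_eq_comp, ← mul_apply_eq_comp, hRSR,
      one_apply_eq_self, inner_self_eq_norm_sq_to_K]
    norm_cast
  have h := (hS (R x)).mapL (innerSL ℂ (R x))
  simp only [innerSL_apply_apply, hterm, hsum] at h
  exact Complex.hasSum_ofReal.mp h

namespace lp

theorem hasSum_norm_sq (c : ℓ²(ι, ℂ)) : HasSum (fun i => ‖c i‖ ^ 2) (‖c‖ ^ 2) := by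
  simpa using lp.hasSum_norm (p := 2) (by norm_num) c

theorem memℓp_two_of_hasSum {c : ι → ℂ} {a : ℝ} (h : HasSum (fun i => ‖c i‖ ^ 2) a) :
    Memℓp c 2 :=
  memℓp_gen (by simpa using h.summable)

theorem hasSum_norm_sq_weightedReindex (e : ι ≃ ι) {w : ι → ℂ} (hw : ∀ i, ‖w i‖ = 1)
    (c : ℓ²(ι, ℂ)) : HasSum (fun i => ‖w i * c (e i)‖ ^ 2) (‖c‖ ^ 2) := by
  simpa [norm_mul, hw, Function.comp_def] using e.hasSum_iff.mpr (hasSum_norm_sq c)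

def weightedReindexₗᵢ (e : ι ≃ ι) {w : ι → ℂ} (hw : ∀ i, ‖w i‖ = 1) :
    ℓ²(ι, ℂ) →ₗᵢ[ℂ] ℓ²(ι, ℂ) where
  toFun c := ⟨fun i => w i * c (e i),
    memℓp_two_of_hasSum (hasSum_norm_sq_weightedReindex e hw c)⟩
  map_add' c d := by ext i; simp only [coeFn_add, Pi.add_apply, mul_add]
  map_smul' a c := by
    ext i
    simp only [coeFn_smul, Pi.smul_apply, smul_eq_mul, RingHom.id_apply]
    ring
  norm_map' c := by
    refine (sq_eq_sq₀ (norm_nonneg _) (norm_nonneg _)).mp ?_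
    exact (hasSum_norm_sq _).unique (hasSum_norm_sq_weightedReindex e hw c)

@[simp]
theorem weightedReindexₗᵢ_apply (e : ι ≃ ι) {w : ι → ℂ} (hw : ∀ i, ‖w i‖ = 1)
    (c : ℓ²(ι, ℂ)) (i : ι) : weightedReindexₗᵢ e hw c i = w i * c (e i) := rfl

def weightedReindex (e : ι ≃ ι) {w : ι → ℂ} (hw : ∀ i, ‖w i‖ = 1) :
    ℓ²(ι, ℂ) ≃ₗᵢ[ℂ] ℓ²(ι, ℂ) :=
  LinearIsometryEquiv.ofLinearIsometry (weightedReindexₗᵢ e hw)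
    (weightedReindexₗᵢ e.symm (w := fun i => conj (w (e.symm i))) (by simp [hw])).toLinearMap
    (by ext c i; simp [← mul_assoc, mul_conj_of_norm_eq_one (hw i)])
    (by ext c i; simp [← mul_assoc, conj_mul_of_norm_eq_one (hw _)])

end lp

section Dilation

variable (v : ι → H) (hv : ∀ x, HasSum (fun i => ‖⟪v i, x⟫‖ ^ 2) (‖x‖ ^ 2))

def analysisOp : H →ₗᵢ[ℂ] ℓ²(ι, ℂ) where
  toFun x := ⟨fun i => ⟪v i, x⟫, lp.memℓp_two_of_hasSum (hv x)⟩
  map_add' x y := by ext i; simp only [inner_add_right, lp.coeFn_add, Pi.add_apply]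
  map_smul' a x := by
    ext i
    simp only [inner_smul_right, lp.coeFn_smul, Pi.smul_apply, smul_eq_mul, RingHom.id_apply]
  norm_map' x := (sq_eq_sq₀ (norm_nonneg _) (norm_nonneg _)).mp <|
    (lp.hasSum_norm_sq _).unique (hv x)

@[simp]
theorem analysisOp_apply (x : H) (i : ι) : analysisOp v hv x i = ⟪v i, x⟫ := rfl

abbrev dilationSpace : Submodule ℂ ℓ²(ι, ℂ) := (LinearMap.range (analysisOp v hv).toLinearMap)ᗮ

theorem single_sub_analysisOp_mem_dilationSpace [DecidableEq ι] (i : ι) :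
    lp.single 2 i 1 - analysisOp v hv (v i) ∈ dilationSpace v hv := by
  rw [dilationSpace, Submodule.mem_orthogonal]
  rintro _ ⟨x, rfl⟩
  simp [inner_sub_right, lp.inner_single_right, (analysisOp v hv).inner_map_map]

def dilationFrame [DecidableEq ι] (i : ι) : dilationSpace v hv :=
  ⟨lp.single 2 i 1 - analysisOp v hv (v i), single_sub_analysisOp_mem_dilationSpace v hv i⟩

theorem dilationFrame_apply [DecidableEq ι] (i j : ι) :
    (dilationFrame v hv j : ℓ²(ι, ℂ)) i = (if i = j then 1 else 0) - ⟪v i, v j⟫ := by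
  simp [dilationFrame, lp.single_apply, Pi.single_apply]

theorem inner_dilationFrame [DecidableEq ι] (i : ι) (y : dilationSpace v hv) :
    ⟪dilationFrame v hv i, y⟫ = (y : ℓ²(ι, ℂ)) i := by
  have hy : ⟪analysisOp v hv (v i), (y : ℓ²(ι, ℂ))⟫ = 0 :=
    (Submodule.mem_orthogonal _ _).mp y.2 _ (LinearMap.mem_range_self _ (v i))
  simp [dilationFrame, Submodule.coe_inner, inner_sub_left, lp.inner_single_left, hy]

theorem hasSum_norm_inner_dilationFrame_sq [DecidableEq ι] (y : dilationSpace v hv) :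
    HasSum (fun i => ‖⟪dilationFrame v hv i, y⟫‖ ^ 2) (‖y‖ ^ 2) := by
  simp only [inner_dilationFrame]
  exact lp.hasSum_norm_sq (y : ℓ²(ι, ℂ))

theorem orthonormal_dilation [DecidableEq ι] :
    Orthonormal ℂ fun i =>
      (WithLp.equiv 2 (H × dilationSpace v hv)).symm (v i, dilationFrame v hv i) := by
  rw [orthonormal_iff_ite]
  intro i j
  simp only [WithLp.equiv_symm_apply, WithLp.prod_inner_apply, inner_dilationFrame,
    dilationFrame_apply, add_sub_cancel]

theorem topologicalClosure_span_dilation_eq_top [DecidableEq ι] [CompleteSpace H] :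
    (Submodule.span ℂ (Set.range fun i => (WithLp.equiv 2 (H × dilationSpace v hv)).symm
      (v i, dilationFrame v hv i))).topologicalClosure = ⊤ := by
  rw [Submodule.topologicalClosure_eq_top_iff, Submodule.eq_bot_iff]
  intro z hz
  have hcoord : ∀ i, ⟪v i, z.fst⟫ + (z.snd : ℓ²(ι, ℂ)) i = 0 := fun i => by
    have h := (Submodule.mem_orthogonal _ z).mp hz _ (Submodule.subset_span ⟨i, rfl⟩)
    simp only [WithLp.equiv_symm_apply, WithLp.prod_inner_apply, inner_dilationFrame] at h
    exact h
  have hsum : analysisOp v hv z.fst + z.snd = 0 := by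
    ext i
    simpa using hcoord i
  have hsnd : (z.snd : ℓ²(ι, ℂ)) = 0 := by
    have hmem : (z.snd : ℓ²(ι, ℂ)) ∈
        LinearMap.range (analysisOp v hv).toLinearMap ⊓ dilationSpace v hv :=
      ⟨⟨-z.fst, by rw [map_neg]; exact neg_eq_iff_add_eq_zero.mpr hsum⟩, z.snd.2⟩
    rwa [Submodule.inf_orthogonal_eq_bot, Submodule.mem_bot] at hmem
  have hfst : z.fst = 0 := by
    rw [hsnd, add_zero] at hsum
    exact (map_eq_zero_iff _ (analysisOp v hv).injective).mp hsum
  rw [WithLp.ext_iff]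
  exact Prod.ext hfst (Subtype.ext hsnd)

end Dilation

section TwistedLeftRegular

variable {G : Type*} [Group G] {μ : G → G → ℂ}

def twistedLeftRegular (hμ : ∀ g h, ‖μ g h‖ = 1) (g : G) : ℓ²(G, ℂ) ≃ₗᵢ[ℂ] ℓ²(G, ℂ) :=
  lp.weightedReindex (Equiv.mulLeft g⁻¹) (w := fun h => μ g (g⁻¹ * h)) fun _ => hμ _ _

variable (hμ : ∀ g h, ‖μ g h‖ = 1)

theorem twistedLeftRegular_apply (g : G) (c : ℓ²(G, ℂ)) (h : G) :
    twistedLeftRegular hμ g c h = μ g (g⁻¹ * h) * c (g⁻¹ * h) := rfl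

theorem twistedLeftRegular_mul
    (hμ_cocycle : ∀ g₁ g₂ g₃ : G, μ g₁ (g₂ * g₃) * μ g₂ g₃ = μ (g₁ * g₂) g₃ * μ g₁ g₂)
    (g h : G) (c : ℓ²(G, ℂ)) :
    twistedLeftRegular hμ g (twistedLeftRegular hμ h c)
      = μ g h • twistedLeftRegular hμ (g * h) c := by
  ext k
  have hk : (g * h)⁻¹ * k = h⁻¹ * (g⁻¹ * k) := by group
  have hμk := hμ_cocycle g h (h⁻¹ * (g⁻¹ * k))
  rw [mul_inv_cancel_left] at hμk
  simp only [twistedLeftRegular_apply, lp.coeFn_smul, Pi.smul_apply, smul_eq_mul, hk]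
  linear_combination c (h⁻¹ * (g⁻¹ * k)) * hμk

theorem twistedLeftRegular_single_one [DecidableEq G] (hμ_one : ∀ g : G, μ g 1 = 1) (g : G) :
    twistedLeftRegular hμ g (lp.single 2 1 1) = lp.single 2 g 1 := by
  ext k
  by_cases hk : k = g
  · simp [twistedLeftRegular_apply, hk, hμ_one]
  · simp [twistedLeftRegular_apply, lp.single_apply, hk, inv_mul_eq_one, Ne.symm hk]

end TwistedLeftRegular

section ProjectiveRep

variable {G : Type*} [Group G] {μ : G → G → ℂ} (hμ : ∀ g h, ‖μ g h‖ = 1)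
  {π : G → H ≃ₗᵢ[ℂ] H} (hπ : ∀ (g h : G) (x : H), π g (π h x) = μ g h • π (g * h) x)

include hμ hπ in
theorem inner_map_mul_map (g k : G) (f x : H) : ⟪π (g * k) f, π g x⟫ = μ g k * ⟪π k f, x⟫ := by
  have h : π (g * k) f = conj (μ g k) • π g (π k f) := by
    rw [hπ, smul_smul, conj_mul_of_norm_eq_one (hμ g k), one_smul]
  rw [h, inner_smul_left, Complex.conj_conj, LinearIsometryEquiv.inner_map_map]

variable {f : H} (hf : ∀ x, HasSum (fun g => ‖⟪π g f, x⟫‖ ^ 2) (‖x‖ ^ 2))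

include hπ in
theorem twistedLeftRegular_analysisOp (g : G) (x : H) :
    twistedLeftRegular hμ g (analysisOp _ hf x) = analysisOp _ hf (π g x) := by
  ext h
  rw [twistedLeftRegular_apply, analysisOp_apply, analysisOp_apply,
    ← inner_map_mul_map hμ hπ, mul_inv_cancel_left]

include hπ in
theorem map_twistedLeftRegular_dilationSpace (g : G) :
    (dilationSpace _ hf).map (twistedLeftRegular hμ g).toLinearEquiv.toLinearMap
      = dilationSpace _ hf := by
  have hcomp : (twistedLeftRegular hμ g).toLinearEquiv.toLinearMap ∘ₗ (analysisOp _ hf).toLinearMap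
      = (analysisOp _ hf).toLinearMap ∘ₗ (π g).toLinearEquiv.toLinearMap :=
    LinearMap.ext (twistedLeftRegular_analysisOp hμ hπ hf g)
  rw [dilationSpace, Submodule.map_orthogonal_equiv, ← LinearMap.range_comp, hcomp,
    LinearMap.range_comp_of_range_eq_top _ (LinearEquiv.range _)]

def dilationRep (g : G) : dilationSpace _ hf ≃ₗᵢ[ℂ] dilationSpace _ hf :=
  (LinearIsometryEquiv.submoduleMap _ (twistedLeftRegular hμ g)).trans
    (LinearIsometryEquiv.ofEq _ _ (map_twistedLeftRegular_dilationSpace hμ hπ hf g))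

theorem coe_dilationRep_apply (g : G) (y : dilationSpace _ hf) :
    (dilationRep hμ hπ hf g y : ℓ²(G, ℂ)) = twistedLeftRegular hμ g y := rfl

theorem dilationRep_mul
    (hμ_cocycle : ∀ g₁ g₂ g₃ : G, μ g₁ (g₂ * g₃) * μ g₂ g₃ = μ (g₁ * g₂) g₃ * μ g₁ g₂)
    (g h : G) (y : dilationSpace _ hf) :
    dilationRep hμ hπ hf g (dilationRep hμ hπ hf h y) = μ g h • dilationRep hμ hπ hf (g * h) y :=
  Subtype.ext (twistedLeftRegular_mul hμ hμ_cocycle g h y)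

theorem dilationRep_dilationFrame_one [DecidableEq G] (hμ_one : ∀ g : G, μ g 1 = 1) (g : G) :
    dilationRep hμ hπ hf g (dilationFrame _ hf 1) = dilationFrame _ hf g := by
  apply Subtype.ext
  rw [coe_dilationRep_apply, dilationFrame, map_sub, twistedLeftRegular_single_one hμ hμ_one,
    twistedLeftRegular_analysisOp hμ hπ hf, hπ, hμ_one, one_smul, mul_one]
  rfl

end ProjectiveRep

end

theorem projective_rep_dilation_general
    (G : Type) [Group G]
    {H : Type} [NormedAddCommGroup H] [InnerProductSpace ℂ H] [CompleteSpace H]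
    (μ : G → G → ℂ) (hμ_uni : ∀ g h : G, ‖μ g h‖ = 1)
    (hμ_cocycle : ∀ g₁ g₂ g₃ : G, μ g₁ (g₂ * g₃) * μ g₂ g₃ = μ (g₁ * g₂) g₃ * μ g₁ g₂)
    (hμ_one : ∀ g : G, μ g 1 = 1 ∧ μ 1 g = 1)
    -- `π` is a `μ`-projective unitary representation of `G` on `H`
    (π : G → (H ≃ₗᵢ[ℂ] H))
    (hπ : ∀ (g h : G) (x : H), π g (π h x) = μ g h • π (g * h) x)
    (f : H)
    -- `S` is the frame operator of `{π(g)f}`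
    (S : H →L[ℂ] H)
    (hS : ∀ x : H, HasSum (fun g : G => ⟪π g f, x⟫ • π g f) (S x))
    -- `R = S^{-1/2}`: the positive square root of the inverse of `S`
    (R : H →L[ℂ] H) (hRpos : R.IsPositive)
    (hRS : (R ∘L R) ∘L S = ContinuousLinearMap.id ℂ H)
    (hSR : S ∘L (R ∘L R) = ContinuousLinearMap.id ℂ H)
    -- `f₁ = S^{-1/2} f`
    (f₁ : H) (hf₁ : f₁ = R f) :
    ∃ (K : Type) (_ : NormedAddCommGroup K) (_ : InnerProductSpace ℂ K) (_ : CompleteSpace K)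
      (π' : G → (K ≃ₗᵢ[ℂ] K)) (f₂ : K),
      -- `π'` is a `μ`-projective unitary representation of `G` on `K`
      (∀ (g h : G) (y : K), π' g (π' h y) = μ g h • π' (g * h) y) ∧
      -- `{π'(g)f₂}` is a Parseval frame for `K`
      (∀ y : K, ∑' g : G, ‖⟪π' g f₂, y⟫‖ ^ 2 = ‖y‖ ^ 2) ∧
      -- `{π(g)f₁ ⊕ π'(g)f₂}` is an orthonormal basis of `H ⊕ K`
      Orthonormal ℂ (fun g : G =>
        (WithLp.equiv 2 (H × K)).symm (π g f₁, π' g f₂)) ∧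
      (Submodule.span ℂ (Set.range fun g : G =>
        (WithLp.equiv 2 (H × K)).symm (π g f₁, π' g f₂))).topologicalClosure = ⊤ := by
  classical
  let u : (H →L[ℂ] H)ˣ := ⟨S, R * R, hSR, hRS⟩
  have hRπ : ∀ g x, R (π g x) = π g (R x) := fun g x => by
    have hSπ : Commute (π g : H →L[ℂ] H) u := ContinuousLinearMap.ext fun y =>
      (frameOp_comm_of_map_eq_smul hS (π g) (Equiv.mulLeft g) (hμ_uni g) (hπ g · f) y).symm
    have hRπ' := Commute.of_nonneg_mul_self_eq_inv (R.nonneg_iff_isPositive.mpr hRpos) rfl hSπ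
    exact congr($hRπ'.eq x).symm
  have hRSR : R * S * R = 1 := by
    have hRu : Commute R u :=
      Commute.units_inv_right_iff.mp ((Commute.refl R).mul_right (Commute.refl R))
    rw [mul_assoc, ← hRu.eq, ← mul_assoc]
    exact hRS
  have hparseval : ∀ x, HasSum (fun g => ‖⟪π g f₁, x⟫‖ ^ 2) (‖x‖ ^ 2) := by
    simpa only [hf₁, hRπ] using hasSum_norm_inner_sq_of_frameOp hS hRpos.isSymmetric hRSR
  refine ⟨dilationSpace _ hparseval, inferInstance, inferInstance, inferInstance,
    dilationRep hμ_uni hπ hparseval, dilationFrame _ hparseval 1,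
    dilationRep_mul hμ_uni hπ hparseval hμ_cocycle,
    ?_, ?_, ?_⟩ <;>
    simp only [dilationRep_dilationFrame_one hμ_uni hπ hparseval fun g => (hμ_one g).1]
  · exact fun y => (hasSum_norm_inner_dilationFrame_sq _ hparseval y).tsum_eq
  · exact orthonormal_dilation _ hparseval
  · exact topologicalClosure_span_dilation_eq_top _ hparseval

/-- **Dilation theorem for frames generated by projective unitary representations.**
Let `π` be a `μ`-projective unitary representation of a countable group `G` on `H` and let
`{π(g)f}` be a frame for `H` with frame operator `S`; set `f₁ = S^{-1/2}f`. Then there exist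
a Hilbert space `K`, a `μ`-projective unitary representation `π'` of `G` on `K`, and
`f₂ ∈ K` such that `{π'(g)f₂}` is a Parseval frame for `K` and `{π(g)f₁ ⊕ π'(g)f₂}` is an
orthonormal basis of `H ⊕ K`. -/
theorem projective_rep_dilation
    (G : Type) [Group G] [Countable G]
    {H : Type} [NormedAddCommGroup H] [InnerProductSpace ℂ H] [CompleteSpace H]
    (μ : G → G → ℂ) (hμ_uni : ∀ g h : G, ‖μ g h‖ = 1)
    (hμ_cocycle : ∀ g₁ g₂ g₃ : G, μ g₁ (g₂ * g₃) * μ g₂ g₃ = μ (g₁ * g₂) g₃ * μ g₁ g₂)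
    (hμ_one : ∀ g : G, μ g 1 = 1 ∧ μ 1 g = 1)
    -- `π` is a `μ`-projective unitary representation of `G` on `H`
    (π : G → (H ≃ₗᵢ[ℂ] H))
    (hπ : ∀ (g h : G) (x : H), π g (π h x) = μ g h • π (g * h) x)
    -- `{π(g)f}` is a frame for `H`
    (f : H) (A B : ℝ) (hA : 0 < A) (hAB : A ≤ B)
    (hframe : ∀ x : H,
      A * ‖x‖ ^ 2 ≤ ∑' g : G, ‖⟪π g f, x⟫‖ ^ 2 ∧
      ∑' g : G, ‖⟪π g f, x⟫‖ ^ 2 ≤ B * ‖x‖ ^ 2)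
    -- `S` is the frame operator of `{π(g)f}`
    (S : H →L[ℂ] H)
    (hS : ∀ x : H, HasSum (fun g : G => ⟪π g f, x⟫ • π g f) (S x))
    -- `R = S^{-1/2}`: the positive square root of the inverse of `S`
    (R : H →L[ℂ] H) (hRpos : R.IsPositive)
    (hRS : (R ∘L R) ∘L S = ContinuousLinearMap.id ℂ H)
    (hSR : S ∘L (R ∘L R) = ContinuousLinearMap.id ℂ H)
    -- `f₁ = S^{-1/2} f`
    (f₁ : H) (hf₁ : f₁ = R f) :
    ∃ (K : Type) (_ : NormedAddCommGroup K) (_ : InnerProductSpace ℂ K) (_ : CompleteSpace K)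
      (π' : G → (K ≃ₗᵢ[ℂ] K)) (f₂ : K),
      -- `π'` is a `μ`-projective unitary representation of `G` on `K`
      (∀ (g h : G) (y : K), π' g (π' h y) = μ g h • π' (g * h) y) ∧
      -- `{π'(g)f₂}` is a Parseval frame for `K`
      (∀ y : K, ∑' g : G, ‖⟪π' g f₂, y⟫‖ ^ 2 = ‖y‖ ^ 2) ∧
      -- `{π(g)f₁ ⊕ π'(g)f₂}` is an orthonormal basis of `H ⊕ K`
      Orthonormal ℂ (fun g : G =>
        (WithLp.equiv 2 (H × K)).symm (π g f₁, π' g f₂)) ∧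
      (Submodule.span ℂ (Set.range fun g : G =>
        (WithLp.equiv 2 (H × K)).symm (π g f₁, π' g f₂))).topologicalClosure = ⊤ :=
  projective_rep_dilation_general G μ hμ_uni hμ_cocycle hμ_one π hπ f S hS R hRpos hRS hSR f₁ hf₁
end

section
/- Let D, T be unitary operators on a complex Hilbert space H satisfying DTD⁻¹ = T², and let ψ ∈ H be such that {DʲTᵏψ : j,k ∈ ℤ} is a frame for H with frame operator S. Suppose there exist: unitary operators D', T' on a complex Hilbert space K with D'T'(D')⁻¹ = (T')², vectors ψ₁ ∈ H and ψ₂ ∈ K such that {(DʲTᵏψ₁) ⊕ ((D')ʲ(T')ᵏψ₂) : j,k ∈ ℤ} is an orthonormal basis of H ⊕ K, and a positive operator E : H → H with E(DʲTᵏψ₁) = DʲTᵏψ for all j,k ∈ ℤ. Then E² = S, Eψ₁ = ψ, and S^{-1/2}(DʲTᵏψ) = DʲTᵏ(S^{-1/2}ψ) for all j,k ∈ ℤ; i.e., S^{-1/2} lies in the local commutant of {DʲTᵏ : j,k ∈ ℤ} at ψ. -/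
local notation "⟪" x ", " y "⟫" => @inner ℂ _ _ x y

/-
Projecting the orthonormal basis `{DʲTᵏψ₁ ⊕ D'ʲT'ᵏψ₂}` of `H ⊕ K` onto `H` gives a Parseval frame
`{DʲTᵏψ₁}`; since `E` is self-adjoint and maps it onto `{DʲTᵏψ}`, the frame operator of `{DʲTᵏψ}`
is `E²`. Hence `S = E²`, and by uniqueness of positive square roots `S^{-1/2} = E⁻¹`, which
intertwines `DʲTᵏψ` with `DʲTᵏψ₁`.
-/

section ParsevalFrame

variable {ι 𝕜 H K : Type*} [RCLike 𝕜] [NormedAddCommGroup H] [InnerProductSpace 𝕜 H]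
  [NormedAddCommGroup K] [InnerProductSpace 𝕜 K]

theorem HilbertBasis.hasSum_inner_fst_smul_fst (b : HilbertBasis ι 𝕜 (WithLp 2 (H × K))) (y : H) :
    HasSum (fun i => inner 𝕜 (b i).fst y • (b i).fst) y := by
  have hsum := (b.hasSum_repr (WithLp.toLp 2 (y, 0))).mapL (WithLp.fstL 2 𝕜 H K)
  simpa [b.repr_apply_apply, WithLp.prod_inner_apply] using hsum

theorem hasSum_inner_apply_smul_apply_of_isSelfAdjoint [CompleteSpace H] {u : ι → H}
    (hu : ∀ y, HasSum (fun i => inner 𝕜 (u i) y • u i) y) {E : H →L[𝕜] H}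
    (hE : IsSelfAdjoint E) (x : H) :
    HasSum (fun i => inner 𝕜 (E (u i)) x • E (u i)) (E (E x)) := by
  refine ((hu (E x)).mapL E).congr_fun fun i => ?_
  rw [map_smul]
  exact congrArg (· • E (u i)) (hE.isSymmetric (u i) x)

end ParsevalFrame

theorem CFC.mul_eq_one_of_mul_self_mul_mul_self_eq_one {A : Type*} [CStarAlgebra A]
    [PartialOrder A] [StarOrderedRing A] {a b : A} (ha : 0 ≤ a) (hb : 0 ≤ b)
    (h : a * a * (b * b) = 1) : a * b = 1 := by
  have h' : b * b * (a * a) = 1 := by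
    simpa [mul_assoc, ha.isSelfAdjoint.star_eq, hb.isSelfAdjoint.star_eq] using congrArg star h
  let u : Aˣ := ⟨b * b, a * a, h', h⟩
  have hcomm : Commute (a * a) b :=
    ((Commute.refl b).mul_right (Commute.refl b)).units_inv_right (u := u) |>.symm
  -- `(a * a) * b` is a positive square root of `a * a`, so it equals `a`
  have hsq : a * a * b * (a * a * b) = a * a :=
    calc a * a * b * (a * a * b) = a * a * (b * (a * a)) * b := by simp only [mul_assoc]
      _ = a * a * (a * a * (b * b)) := by rw [← hcomm.eq]; simp only [mul_assoc]
      _ = a * a := by rw [h, mul_one]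
  have hab : a * a * b = a := by
    rw [← CFC.sqrt_unique hsq (hcomm.mul_nonneg ((Commute.refl a).mul_nonneg ha ha) hb),
      CFC.sqrt_mul_self a]
  rw [← hab, mul_assoc, h]

theorem frame_wavelet_dilation_necessity_general
    {H : Type} [NormedAddCommGroup H] [InnerProductSpace ℂ H] [CompleteSpace H]
    (D T : H ≃ₗᵢ[ℂ] H)
    (ψ : H)
    -- `S` is the frame operator of `{DʲTᵏψ}`
    (S : H →L[ℂ] H)
    (hS : ∀ x : H, HasSum (fun p : ℤ × ℤ => ⟪(D ^ p.1) ((T ^ p.2) ψ), x⟫ •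
      (D ^ p.1) ((T ^ p.2) ψ)) (S x))
    -- `R = S^{-1/2}`: the positive square root of the inverse of `S`
    (R : H →L[ℂ] H) (hRpos : R.IsPositive)
    (hRS : (R ∘L R) ∘L S = ContinuousLinearMap.id ℂ H)
    {K : Type} [NormedAddCommGroup K] [InnerProductSpace ℂ K] [CompleteSpace K]
    (D' T' : K ≃ₗᵢ[ℂ] K)
    -- `{DʲTᵏψ₁ ⊕ (D')ʲ(T')ᵏψ₂}` is an orthonormal basis of `H ⊕ K`
    (ψ₁ : H) (ψ₂ : K)
    (honb₁ : Orthonormal ℂ (fun p : ℤ × ℤ =>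
      (WithLp.equiv 2 (H × K)).symm ((D ^ p.1) ((T ^ p.2) ψ₁), (D' ^ p.1) ((T' ^ p.2) ψ₂))))
    (honb₂ : (Submodule.span ℂ (Set.range fun p : ℤ × ℤ =>
      (WithLp.equiv 2 (H × K)).symm ((D ^ p.1) ((T ^ p.2) ψ₁),
        (D' ^ p.1) ((T' ^ p.2) ψ₂)))).topologicalClosure = ⊤)
    -- `E` is a positive operator with `E(DʲTᵏψ₁) = DʲTᵏψ`
    (E : H →L[ℂ] H) (hEpos : E.IsPositive)
    (hE : ∀ j k : ℤ, E ((D ^ j) ((T ^ k) ψ₁)) = (D ^ j) ((T ^ k) ψ)) :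
    -- `E² = S`, `Eψ₁ = ψ`, and `S^{-1/2}(DʲTᵏψ) = DʲTᵏ(S^{-1/2}ψ)`
    E ∘L E = S ∧ E ψ₁ = ψ ∧
    (∀ j k : ℤ, R ((D ^ j) ((T ^ k) ψ)) = (D ^ j) ((T ^ k) (R ψ))) := by
  have hparseval (y : H) : HasSum (fun p : ℤ × ℤ =>
      ⟪(D ^ p.1) ((T ^ p.2) ψ₁), y⟫ • (D ^ p.1) ((T ^ p.2) ψ₁)) y := by
    simpa using (HilbertBasis.mk honb₁ honb₂.ge).hasSum_inner_fst_smul_fst y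
  have hES : E ∘L E = S := ContinuousLinearMap.ext fun x => by
    have hEE := hasSum_inner_apply_smul_apply_of_isSelfAdjoint hparseval hEpos.isSelfAdjoint x
    simp only [hE] at hEE
    exact hEE.unique (hS x)
  have hEψ : E ψ₁ = ψ := by simpa using hE 0 0
  have hRE : R * E = 1 := by
    refine CFC.mul_eq_one_of_mul_self_mul_mul_self_eq_one
      ((ContinuousLinearMap.nonneg_iff_isPositive R).mpr hRpos)
      ((ContinuousLinearMap.nonneg_iff_isPositive E).mpr hEpos) ?_
    rw [← hES] at hRS
    exact hRS
  have hRE_apply (x : H) : R (E x) = x := DFunLike.congr_fun hRE x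
  refine ⟨hES, hEψ, fun j k => ?_⟩
  rw [← hE j k, hRE_apply, ← hEψ, hRE_apply]

/-- **Necessity of the local commutant condition for dilation of frame wavelets.**
Let `{D,T}` be a representation of `BS(1,2)` on `H` (`DTD⁻¹ = T²`) and `ψ` a frame wavelet
with frame operator `S`. If there exist a representation `{D',T'}` of `BS(1,2)` on `K`,
vectors `ψ₁ ∈ H`, `ψ₂ ∈ K` such that `{DʲTᵏψ₁ ⊕ (D')ʲ(T')ᵏψ₂}` is an orthonormal basis of
`H ⊕ K`, and a positive operator `E` with `E(DʲTᵏψ₁) = DʲTᵏψ`, then `E² = S`, `Eψ₁ = ψ`,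
and `S^{-1/2}` lies in the local commutant of `{DʲTᵏ}` at `ψ`:
`S^{-1/2}(DʲTᵏψ) = DʲTᵏ(S^{-1/2}ψ)`. -/
theorem frame_wavelet_dilation_necessity
    {H : Type} [NormedAddCommGroup H] [InnerProductSpace ℂ H] [CompleteSpace H]
    -- `{D, T}` is a representation of the Baumslag–Solitar group `BS(1,2)`
    (D T : H ≃ₗᵢ[ℂ] H) (hDT : D * T * D⁻¹ = T ^ 2)
    -- `{DʲTᵏψ}` is a frame for `H`
    (ψ : H) (A B : ℝ) (hA : 0 < A) (hAB : A ≤ B)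
    (hframe : ∀ x : H,
      A * ‖x‖ ^ 2 ≤ ∑' p : ℤ × ℤ, ‖⟪(D ^ p.1) ((T ^ p.2) ψ), x⟫‖ ^ 2 ∧
      ∑' p : ℤ × ℤ, ‖⟪(D ^ p.1) ((T ^ p.2) ψ), x⟫‖ ^ 2 ≤ B * ‖x‖ ^ 2)
    -- `S` is the frame operator of `{DʲTᵏψ}`
    (S : H →L[ℂ] H)
    (hS : ∀ x : H, HasSum (fun p : ℤ × ℤ => ⟪(D ^ p.1) ((T ^ p.2) ψ), x⟫ •
      (D ^ p.1) ((T ^ p.2) ψ)) (S x))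
    -- `R = S^{-1/2}`: the positive square root of the inverse of `S`
    (R : H →L[ℂ] H) (hRpos : R.IsPositive)
    (hRS : (R ∘L R) ∘L S = ContinuousLinearMap.id ℂ H)
    (hSR : S ∘L (R ∘L R) = ContinuousLinearMap.id ℂ H)
    -- a representation `{D', T'}` of `BS(1,2)` on a Hilbert space `K`
    {K : Type} [NormedAddCommGroup K] [InnerProductSpace ℂ K] [CompleteSpace K]
    (D' T' : K ≃ₗᵢ[ℂ] K) (hDT' : D' * T' * D'⁻¹ = T' ^ 2)
    -- `{DʲTᵏψ₁ ⊕ (D')ʲ(T')ᵏψ₂}` is an orthonormal basis of `H ⊕ K`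
    (ψ₁ : H) (ψ₂ : K)
    (honb₁ : Orthonormal ℂ (fun p : ℤ × ℤ =>
      (WithLp.equiv 2 (H × K)).symm ((D ^ p.1) ((T ^ p.2) ψ₁), (D' ^ p.1) ((T' ^ p.2) ψ₂))))
    (honb₂ : (Submodule.span ℂ (Set.range fun p : ℤ × ℤ =>
      (WithLp.equiv 2 (H × K)).symm ((D ^ p.1) ((T ^ p.2) ψ₁),
        (D' ^ p.1) ((T' ^ p.2) ψ₂)))).topologicalClosure = ⊤)
    -- `E` is a positive operator with `E(DʲTᵏψ₁) = DʲTᵏψ`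
    (E : H →L[ℂ] H) (hEpos : E.IsPositive)
    (hE : ∀ j k : ℤ, E ((D ^ j) ((T ^ k) ψ₁)) = (D ^ j) ((T ^ k) ψ)) :
    -- `E² = S`, `Eψ₁ = ψ`, and `S^{-1/2}(DʲTᵏψ) = DʲTᵏ(S^{-1/2}ψ)`
    E ∘L E = S ∧ E ψ₁ = ψ ∧
    (∀ j k : ℤ, R ((D ^ j) ((T ^ k) ψ)) = (D ^ j) ((T ^ k) (R ψ))) :=
  frame_wavelet_dilation_necessity_general D T ψ S hS R hRpos hRS D' T' ψ₁ ψ₂ honb₁ honb₂ E hEpos hE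
end
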